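/- arXiv:1403.4438 — 3 statements merged into one kernel-verified Lean document; each statement's English description precedes it below -/
import Mathlib

section
/- Let A be a symmetric densely defined operator on a Hilbert space E with domain D(A), and suppose there is c > 0 such that ⟨Au, u⟩ ≥ c⟨u, u⟩ for all u ∈ D(A). Then A is essentially self-adjoint if and only if its range A(D(A)) is dense in E. -/
/-!
Let `B` be the closure of `A`; it exists because `A ≤ A†` and `A†` is closed. Symmetry and the
lower bound `c ‖u‖ ≤ ‖A u‖` (which follows from strict positivity by Cauchy–Schwarz) are closed
conditions on the graph, so `B` inherits them. If the range of `A` is dense, then so is the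
range of `B`, which is also closed since `B` is closed and bounded below; hence `B` is
surjective, and a surjective symmetric operator is self-adjoint. Conversely, if `B` is
self-adjoint, then the orthogonal complement of its range is `ker B† = ker B = 0`, and the range
of `B` lies in the closure of the range of `A`.
-/

open scoped InnerProductSpace

namespace LinearPMap

theorem range_subset_range_of_le {R E F : Type*} [Ring R] [AddCommGroup E] [AddCommGroup F]
    [Module R E] [Module R F] {f g : E →ₗ.[R] F} (h : f ≤ g) : Set.range f ⊆ Set.range g := by
  rintro _ ⟨x, rfl⟩
  exact ⟨⟨x, h.1 x.2⟩, (h.2 rfl).symm⟩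

section Closure

variable {R E F : Type*} [CommRing R] [AddCommGroup E] [AddCommGroup F] [Module R E]
  [Module R F] [TopologicalSpace E] [TopologicalSpace F] [ContinuousAdd E] [ContinuousAdd F]
  [TopologicalSpace R] [ContinuousSMul R E] [ContinuousSMul R F] {f : E →ₗ.[R] F}

theorem IsClosable.closure_mem_of_isClosed (hf : f.IsClosable) {S : Set (E × F)}
    (hS : _root_.IsClosed S) (h : ∀ x : f.domain, ((x : E), f x) ∈ S) (x : f.closure.domain) :
    ((x : E), f.closure x) ∈ S := by
  have hgraph : (f.graph : Set (E × F)) ⊆ S := by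
    rintro p hp
    obtain ⟨y, rfl⟩ := f.mem_graph_iff'.mp hp
    exact h y
  have hclosure := closure_minimal hgraph hS
  rw [← Submodule.topologicalClosure_coe, hf.graph_closure_eq_closure_graph] at hclosure
  exact hclosure (f.closure.mem_graph x)

theorem IsClosable.range_closure_subset (hf : f.IsClosable) :
    Set.range f.closure ⊆ _root_.closure (Set.range f) := by
  rintro _ ⟨x, rfl⟩
  exact hf.closure_mem_of_isClosed (S := Prod.snd ⁻¹' _root_.closure (Set.range f))
    (isClosed_closure.preimage continuous_snd) (fun y => subset_closure ⟨y, rfl⟩) x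

end Closure

section BoundedBelow

variable {R E F : Type*} [CommRing R] [NormedAddCommGroup E] [NormedAddCommGroup F]
  [Module R E] [Module R F] {T : E →ₗ.[R] F} {c : ℝ}

theorem injective_of_bounded_below (hc : 0 < c) (hT : ∀ x : T.domain, c * ‖(x : E)‖ ≤ ‖T x‖) :
    Function.Injective T := by
  refine (injective_iff_map_eq_zero T.toFun).mpr fun x hx => ?_
  have hx' : c * ‖(x : E)‖ ≤ 0 := by simpa [show T x = 0 from hx] using hT x
  exact Subtype.ext (norm_eq_zero.mp (by nlinarith [norm_nonneg (x : E)]))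

theorem IsClosed.isClosed_range_of_bounded_below [CompleteSpace E] (hT : T.IsClosed)
    (hc : 0 < c) (hbound : ∀ x : T.domain, c * ‖(x : E)‖ ≤ ‖T x‖) :
    _root_.IsClosed (Set.range T) := by
  refine isSeqClosed_iff_isClosed.mp fun y z hy hyz => ?_
  choose x hx using hy
  have hcauchy : CauchySeq fun n => (x n : E) := by
    refine Metric.cauchySeq_iff.mpr fun ε hε => ?_
    obtain ⟨N, hN⟩ := Metric.cauchySeq_iff.mp hyz.cauchySeq (c * ε) (by positivity)
    refine ⟨N, fun m hm n hn => ?_⟩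
    have hmn : c * dist (x m : E) (x n) < c * ε := by
      calc c * dist (x m : E) (x n) ≤ ‖T (x m - x n)‖ := by
            simpa [dist_eq_norm] using hbound (x m - x n)
        _ = dist (y m) (y n) := by rw [T.map_sub, hx, hx, dist_eq_norm]
        _ < c * ε := hN m hm n hn
    exact lt_of_mul_lt_mul_left hmn hc.le
  obtain ⟨u, hu⟩ := cauchySeq_tendsto_of_complete hcauchy
  have hmem : (u, z) ∈ (T.graph : Set (E × F)) :=
    hT.mem_of_tendsto (hu.prodMk_nhds hyz)
      (Filter.Eventually.of_forall fun n => hx n ▸ T.mem_graph (x n))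
  exact mem_range_iff.mpr ⟨u, hmem⟩

end BoundedBelow

section InnerProduct

variable {𝕜 E F : Type*} [RCLike 𝕜] [NormedAddCommGroup E] [InnerProductSpace 𝕜 E]
  [NormedAddCommGroup F] [InnerProductSpace 𝕜 F]

theorem IsFormalAdjoint.closure {T : E →ₗ.[𝕜] F} {S : F →ₗ.[𝕜] E} (h : T.IsFormalAdjoint S)
    (hT : T.IsClosable) (hS : S.IsClosable) : T.closure.IsFormalAdjoint S.closure := by
  have hS' (x : T.domain) (y : S.closure.domain) : ⟪T x, (y : F)⟫_𝕜 = ⟪(x : E), S.closure y⟫_𝕜 :=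
    hS.closure_mem_of_isClosed (S := {p | ⟪T x, p.1⟫_𝕜 = ⟪(x : E), p.2⟫_𝕜})
      (isClosed_eq (by fun_prop) (by fun_prop)) (h x) y
  exact fun x y => hT.closure_mem_of_isClosed (S := {p | ⟪p.2, (y : F)⟫_𝕜 = ⟪p.1, S.closure y⟫_𝕜})
    (isClosed_eq (by fun_prop) (by fun_prop)) (fun x => hS' x y) x

theorem IsFormalAdjoint.isClosable [CompleteSpace E] {T : E →ₗ.[𝕜] F} {S : F →ₗ.[𝕜] E}
    (h : T.IsFormalAdjoint S) (hT : Dense (T.domain : Set E)) : S.IsClosable :=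
  (adjoint_isClosed hT).isClosable.leIsClosable (h.le_adjoint hT)

variable [CompleteSpace E] {T : E →ₗ.[𝕜] E}

theorem isSelfAdjoint_of_surjective (hT : Dense (T.domain : Set E)) (hsym : T.IsFormalAdjoint T)
    (hsurj : Function.Surjective T) : IsSelfAdjoint T := by
  refine isSelfAdjoint_def.mpr (le_antisymm (le_of_le_graph fun p hp => ?_) (hsym.le_adjoint hT))
  obtain ⟨y, rfl⟩ := T†.mem_graph_iff'.mp hp
  obtain ⟨u, hu⟩ := hsurj (T† y)
  have hyu : (y : E) = u := ext_inner_right 𝕜 fun v => by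
    obtain ⟨w, rfl⟩ := hsurj v
    rw [← adjoint_isFormalAdjoint hT y w, ← hu, hsym]
  exact T.mem_graph_iff.mpr ⟨u, hyu.symm, hu⟩

theorem _root_.IsSelfAdjoint.dense_range_of_injective (hT : IsSelfAdjoint T)
    (hinj : Function.Injective T) : Dense (Set.range T) := by
  change Dense (Set.range T.toFun)
  rw [← LinearMap.coe_range, Submodule.dense_iff_topologicalClosure_eq_top,
    Submodule.topologicalClosure_eq_top_iff, Submodule.eq_bot_iff]
  intro v hv
  have hv' (x : T.domain) : ⟪(0 : E), (x : E)⟫_𝕜 = ⟪v, T x⟫_𝕜 := by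
    rw [inner_zero_left]
    exact (inner_eq_zero_symm.mp (hv _ ⟨x, rfl⟩)).symm
  have hvadj : v ∈ T†.domain := mem_adjoint_domain_of_exists v ⟨0, hv'⟩
  have hgraph : (v, 0) ∈ T.graph := by
    rw [← isSelfAdjoint_def.mp hT]
    exact T†.mem_graph_iff.mpr ⟨⟨v, hvadj⟩, rfl, adjoint_apply_eq hT.dense_domain _ hv'⟩
  obtain ⟨x, rfl, hx⟩ := T.mem_graph_iff.mp hgraph
  exact congrArg Subtype.val (hinj (hx.trans T.map_zero.symm))

end InnerProduct

end LinearPMap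

theorem mul_norm_le_norm_of_mul_re_inner_le {𝕜 E : Type*} [RCLike 𝕜] [NormedAddCommGroup E]
    [InnerProductSpace 𝕜 E] {c : ℝ} {x y : E}
    (h : c * RCLike.re ⟪x, x⟫_𝕜 ≤ RCLike.re ⟪y, x⟫_𝕜) : c * ‖x‖ ≤ ‖y‖ := by
  rcases eq_or_ne x 0 with rfl | hx
  · simp
  refine le_of_mul_le_mul_right ?_ (norm_pos_iff.mpr hx)
  calc c * ‖x‖ * ‖x‖ = c * RCLike.re ⟪x, x⟫_𝕜 := by rw [mul_assoc, inner_self_eq_norm_mul_norm]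
    _ ≤ RCLike.re ⟪y, x⟫_𝕜 := h
    _ ≤ ‖y‖ * ‖x‖ := re_inner_le_norm y x

/-- A symmetric densely defined, strictly positive operator `A` on a Hilbert space `E`
is essentially self-adjoint (its closure is self-adjoint) if and only if its range
is dense in `E`. -/
theorem essentially_selfAdjoint_iff_denseRange_of_strictly_positive
    {𝕜 E : Type*} [RCLike 𝕜] [NormedAddCommGroup E] [InnerProductSpace 𝕜 E]
    [CompleteSpace E] (A : E →ₗ.[𝕜] E) (hdense : Dense (A.domain : Set E))
    (hsym : ∀ u v : A.domain, ⟪A u, (v : E)⟫_𝕜 = ⟪(u : E), A v⟫_𝕜)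
    (c : ℝ) (hc : 0 < c)
    (hpos : ∀ u : A.domain, c * RCLike.re ⟪(u : E), (u : E)⟫_𝕜 ≤ RCLike.re ⟪A u, (u : E)⟫_𝕜) :
    IsSelfAdjoint A.closure ↔ Dense (Set.range fun u : A.domain => A u) := by
  have hsymA : A.IsFormalAdjoint A := hsym
  have hcl : A.IsClosable := hsymA.isClosable hdense
  have hbound : ∀ u : A.closure.domain, c * ‖(u : E)‖ ≤ ‖A.closure u‖ :=
    hcl.closure_mem_of_isClosed (S := {p | c * ‖p.1‖ ≤ ‖p.2‖})
      (isClosed_le (by fun_prop) (by fun_prop))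
      fun u => mul_norm_le_norm_of_mul_re_inner_le (hpos u)
  constructor
  · intro hsa
    exact dense_closure.mp
      ((hsa.dense_range_of_injective (LinearPMap.injective_of_bounded_below hc hbound)).mono
        hcl.range_closure_subset)
  · intro hrange
    refine LinearPMap.isSelfAdjoint_of_surjective (hdense.mono A.le_closure.1)
      (hsymA.closure hcl hcl) ?_
    have hclosed := hcl.closure_isClosed.isClosed_range_of_bounded_below hc hbound
    rw [← Set.range_eq_univ, ← hclosed.closure_eq]
    exact (hrange.mono (LinearPMap.range_subset_range_of_le A.le_closure)).closure_eq
end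

section
/- For every ν ∈ ℝ, the modified Bessel function of the second kind satisfies K_ν(r) ~ √(π/2) r^{-1/2} e^{-r} as r → +∞. -/
open Real Filter Set

/-- The modified Bessel function of the second kind, via its standard
integral representation `K_ν(r) = ∫_0^∞ e^{-r cosh t} cosh(ν t) dt`. -/
noncomputable def besselK (ν r : ℝ) : ℝ :=
  ∫ t in Set.Ioi (0 : ℝ), Real.exp (-r * Real.cosh t) * Real.cosh (ν * t)

/-!
Laplace's method. Substituting `t = s / √r` gives
`K_ν(r) = e^{-r} r^{-1/2} ∫_0^∞ e^{-r (cosh (s/√r) - 1)} cosh (ν s/√r) ds`.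
As `r → ∞` the integrand tends to `e^{-s²/2}`, and since `cosh x - 1 ≥ x²/2` it is dominated
for `r ≥ 1` by the integrable `e^{-s²/2} cosh (ν s)`; dominated convergence then gives the
Gaussian integral `∫_0^∞ e^{-s²/2} ds = √(π/2)`.
-/

open MeasureTheory Topology

lemma Real.sq_div_two_le_cosh_sub_one (x : ℝ) : x ^ 2 / 2 ≤ cosh x - 1 := by
  have h := sum_le_hasSum (Finset.range 2) (fun n _ => by rw [pow_mul]; positivity)
    (hasSum_cosh x)
  norm_num [Finset.sum_range_succ] at h
  linarith

lemma Real.cosh_sub_one_eq_two_mul_sinh_half_sq (x : ℝ) : cosh x - 1 = 2 * sinh (x / 2) ^ 2 := by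
  nth_rewrite 1 [show x = 2 * (x / 2) by ring]
  rw [cosh_two_mul, cosh_sq]
  ring

lemma Real.tendsto_sinh_div_self : Tendsto (fun y => sinh y / y) (𝓝[≠] 0) (𝓝 1) := by
  have h := hasDerivAt_sinh 0
  rw [hasDerivAt_iff_tendsto_slope] at h
  simpa [slope_fun_def, div_eq_inv_mul] using h

lemma Real.tendsto_cosh_sub_one_div_sq :
    Tendsto (fun x => (cosh x - 1) / x ^ 2) (𝓝[≠] 0) (𝓝 (1 / 2)) := by
  have half : Tendsto (fun x : ℝ => x / 2) (𝓝[≠] 0) (𝓝[≠] 0) :=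
    tendsto_nhdsWithin_of_tendsto_nhds_of_eventually_within _
      ((continuous_id.div_const 2).tendsto' 0 0 (zero_div 2) |>.mono_left nhdsWithin_le_nhds)
      (eventually_nhdsWithin_of_forall fun x hx => div_ne_zero hx two_ne_zero)
  have h := ((tendsto_sinh_div_self.comp half).pow 2).div_const 2
  rw [one_pow] at h
  refine h.congr' (eventually_nhdsWithin_of_forall fun x hx => ?_)
  dsimp only
  have hx : x ≠ 0 := hx
  rw [Function.comp_apply, cosh_sub_one_eq_two_mul_sinh_half_sq]
  field_simp

lemma tendsto_mul_cosh_div_sqrt_sub_one {s : ℝ} (hs : s ≠ 0) :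
    Tendsto (fun r => r * (cosh (s / √r) - 1)) atTop (𝓝 (s ^ 2 / 2)) := by
  have hlim : Tendsto (fun r => s / √r) atTop (𝓝[≠] 0) :=
    tendsto_nhdsWithin_of_tendsto_nhds_of_eventually_within _
      (tendsto_const_nhds.div_atTop tendsto_sqrt_atTop)
      (eventually_gt_atTop 0 |>.mono fun r hr => div_ne_zero hs (sqrt_pos.2 hr).ne')
  have h := (tendsto_cosh_sub_one_div_sq.comp hlim).const_mul (s ^ 2)
  rw [mul_one_div] at h
  refine h.congr' (eventually_gt_atTop 0 |>.mono fun r hr => ?_)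
  have hsqrt : √r ≠ 0 := (sqrt_pos.2 hr).ne'
  rw [Function.comp_apply, div_pow, sq_sqrt hr.le]
  field_simp

lemma integrable_exp_neg_sq_div_two_mul_cosh (a : ℝ) :
    Integrable fun s => exp (-(s ^ 2 / 2)) * cosh (a * s) := by
  have shifted (c : ℝ) : Integrable fun s => exp (a ^ 2 / 2) / 2 * exp (-(1 / 2) * (s - c) ^ 2) :=
    ((integrable_exp_neg_mul_sq (by norm_num : (0 : ℝ) < 1 / 2)).comp_sub_right c).const_mul _
  refine ((shifted a).add (shifted (-a))).congr (.of_forall fun s => ?_)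
  have h₁ : exp (a ^ 2 / 2) * exp (-(1 / 2) * (s - a) ^ 2) = exp (-(s ^ 2 / 2)) * exp (a * s) := by
    rw [← exp_add, ← exp_add]
    ring_nf
  have h₂ : exp (a ^ 2 / 2) * exp (-(1 / 2) * (s - -a) ^ 2) =
      exp (-(s ^ 2 / 2)) * exp (-(a * s)) := by
    rw [← exp_add, ← exp_add]
    ring_nf
  simp only [Pi.add_apply, cosh_eq]
  linear_combination (h₁ + h₂) / 2

lemma integral_exp_neg_sq_div_two_Ioi : ∫ s in Ioi (0 : ℝ), exp (-(s ^ 2 / 2)) = √(π / 2) := by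
  have h := integral_gaussian_Ioi (1 / 2)
  simp only [neg_mul, one_div_mul_eq_div] at h
  rw [h, show π / (1 / 2) = 2 ^ 2 * (π / 2) by ring, sqrt_mul (by positivity),
    sqrt_sq zero_le_two]
  ring

/-- The integrand of `besselK` after the substitution `t = s / √r`, with the factor `e^{-r}`
taken out. -/
noncomputable def besselKRescaledIntegrand (ν r s : ℝ) : ℝ :=
  exp (-(r * (cosh (s / √r) - 1))) * cosh (ν * (s / √r))

lemma besselK_eq_mul_integral_besselKRescaledIntegrand (ν : ℝ) {r : ℝ} (hr : 0 < r) :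
    besselK ν r = exp (-r) * r ^ (-(1 : ℝ) / 2) *
      ∫ s in Ioi (0 : ℝ), besselKRescaledIntegrand ν r s := by
  have hsqrt : 0 < √r := sqrt_pos.2 hr
  have hintegrand (s : ℝ) : exp (-r * cosh (s * (√r)⁻¹)) * cosh (ν * (s * (√r)⁻¹)) =
      exp (-r) * besselKRescaledIntegrand ν r s := by
    rw [besselKRescaledIntegrand, ← div_eq_mul_inv, ← mul_assoc, ← exp_add]
    ring_nf
  have hsubst := integral_comp_mul_right_Ioi'
    (fun t => exp (-r * cosh t) * cosh (ν * t)) 0 (inv_pos.2 hsqrt)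
  rw [zero_mul] at hsubst
  rw [besselK, ← hsubst, smul_eq_mul]
  simp only [hintegrand, integral_const_mul]
  rw [show (-(1 : ℝ) / 2) = -(1 / 2) by ring, rpow_neg hr.le, ← sqrt_eq_rpow]
  ring

lemma norm_besselKRescaledIntegrand_le (ν : ℝ) {r s : ℝ} (hr : 1 ≤ r) (hs : 0 ≤ s) :
    ‖besselKRescaledIntegrand ν r s‖ ≤ exp (-(s ^ 2 / 2)) * cosh (|ν| * s) := by
  have hsqrt : 1 ≤ √r := one_le_sqrt.2 hr
  have hexp : exp (-(r * (cosh (s / √r) - 1))) ≤ exp (-(s ^ 2 / 2)) := by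
    rw [exp_le_exp, neg_le_neg_iff]
    calc s ^ 2 / 2 = r * ((s / √r) ^ 2 / 2) := by
          rw [div_pow, sq_sqrt (by linarith)]; field_simp
      _ ≤ r * (cosh (s / √r) - 1) := by gcongr; exact sq_div_two_le_cosh_sub_one _
  have hcosh : cosh (ν * (s / √r)) ≤ cosh (|ν| * s) := by
    rw [cosh_le_cosh, abs_mul, abs_mul, abs_abs, abs_div, abs_of_nonneg hs,
      abs_of_pos (by positivity : 0 < √r)]
    gcongr
    exact div_le_self hs hsqrt
  rw [besselKRescaledIntegrand, norm_of_nonneg (by positivity)]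
  gcongr

lemma tendsto_besselKRescaledIntegrand (ν : ℝ) {s : ℝ} (hs : s ≠ 0) :
    Tendsto (fun r => besselKRescaledIntegrand ν r s) atTop (𝓝 (exp (-(s ^ 2 / 2)))) := by
  have hcosh : Tendsto (fun r => cosh (ν * (s / √r))) atTop (𝓝 1) := by
    have h := ((tendsto_const_nhds (x := s)).div_atTop tendsto_sqrt_atTop).const_mul ν
    rw [mul_zero] at h
    simpa [Function.comp_def] using (continuous_cosh.tendsto 0).comp h
  simpa [besselKRescaledIntegrand] using ((continuous_exp.tendsto _).comp
    (tendsto_mul_cosh_div_sqrt_sub_one hs).neg).mul hcosh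

lemma tendsto_integral_besselKRescaledIntegrand (ν : ℝ) :
    Tendsto (fun r => ∫ s in Ioi (0 : ℝ), besselKRescaledIntegrand ν r s) atTop
      (𝓝 (√(π / 2))) := by
  rw [← integral_exp_neg_sq_div_two_Ioi]
  refine tendsto_integral_filter_of_dominated_convergence _ (.of_forall fun r => ?_)
    ?_ (integrable_exp_neg_sq_div_two_mul_cosh |ν|).integrableOn ?_
  · exact Continuous.aestronglyMeasurable (by unfold besselKRescaledIntegrand; fun_prop)
  · filter_upwards [eventually_ge_atTop 1] with r hr
    filter_upwards [ae_restrict_mem measurableSet_Ioi] with s hs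
    exact norm_besselKRescaledIntegrand_le ν hr (le_of_lt hs)
  · filter_upwards [ae_restrict_mem measurableSet_Ioi] with s hs
    exact tendsto_besselKRescaledIntegrand ν (ne_of_gt hs)

/-- For every `ν ∈ ℝ`, `K_ν(r) ~ √(π/2) r^{-1/2} e^{-r}` as `r → +∞`. -/
theorem besselK_asymptotics_infty (ν : ℝ) :
    Tendsto (fun r : ℝ => besselK ν r / (Real.sqrt (π / 2) * r ^ (-(1:ℝ)/2) * Real.exp (-r)))
      atTop (nhds 1) := by
  have hpos : 0 < √(π / 2) := sqrt_pos.2 (by positivity)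
  have h := (tendsto_integral_besselKRescaledIntegrand ν).div_const √(π / 2)
  rw [div_self hpos.ne'] at h
  refine h.congr' (eventually_gt_atTop 0 |>.mono fun r hr => ?_)
  dsimp only
  rw [besselK_eq_mul_integral_besselKRescaledIntegrand ν hr]
  have hrpow : 0 < r ^ (-(1 : ℝ) / 2) := rpow_pos_of_pos hr _
  field_simp
end

section
/- Let s ∈ (0,1), N > 2s, and for α ∈ (0, (N-2s)/2) define λ(α) = 2^{2s} · [Γ((N+2s+2α)/4) Γ((N+2s-2α)/4)] / [Γ((N-2s-2α)/4) Γ((N-2s+2α)/4)]. Then α ↦ λ(α) is strictly decreasing on (0, (N-2s)/2). -/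
open Real Set

/-- The coupling constant `λ(α)` of Hardy-type fractional operators. -/
noncomputable def lamCoupling (N : ℕ) (s α : ℝ) : ℝ :=
  2 ^ (2 * s) *
    (Real.Gamma ((N + 2 * s + 2 * α) / 4) * Real.Gamma ((N + 2 * s - 2 * α) / 4)) /
    (Real.Gamma ((N - 2 * s - 2 * α) / 4) * Real.Gamma ((N - 2 * s + 2 * α) / 4))

/-!
Write `λ(α) = 2^{2s} Γ(a + t) Γ(a - t) / (Γ(b + t) Γ(b - t))` with `t = α/2`,
`a = (N + 2s)/4 > b = (N - 2s)/4`. Euler's product for `Γ` turns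
`Γ(c + y) Γ(c - y) / (Γ(c + x) Γ(c - x))` into `∏ⱼ ((c + j)² - x²) / ((c + j)² - y²)`.
For `0 ≤ x < y < b` each factor strictly decreases as `c` grows, so this ratio is smaller
at `c = a` than at `c = b`, which is the monotonicity of `λ` after cross-multiplying.
-/

open Filter Finset Topology Nat

lemma lt_of_tendsto_prod_range_of_le {f g : ℕ → ℝ} {L M : ℝ} (hf : ∀ j, 0 < f j)
    (hfg : ∀ j, f j ≤ g j) (hfg₀ : f 0 < g 0)
    (hL : Tendsto (fun n ↦ ∏ j ∈ range n, f j) atTop (𝓝 L))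
    (hM : Tendsto (fun n ↦ ∏ j ∈ range n, g j) atTop (𝓝 M)) (hL₀ : 0 < L) :
    L < M := by
  have hstep : ∀ n, g 0 * ∏ j ∈ range (n + 1), f j ≤ f 0 * ∏ j ∈ range (n + 1), g j := by
    intro n
    have htail : ∏ j ∈ range n, f (j + 1) ≤ ∏ j ∈ range n, g (j + 1) :=
      prod_le_prod (fun j _ ↦ (hf _).le) fun j _ ↦ hfg _
    rw [prod_range_succ', prod_range_succ']
    nlinarith [mul_le_mul_of_nonneg_left htail (mul_pos (hf 0) ((hf 0).trans hfg₀)).le]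
  have hlim : g 0 * L ≤ f 0 * M :=
    le_of_tendsto_of_tendsto' ((hL.comp (tendsto_add_atTop_nat 1)).const_mul _)
      ((hM.comp (tendsto_add_atTop_nat 1)).const_mul _) hstep
  have := hf 0
  nlinarith

lemma sub_div_sub_lt_sub_div_sub {p q u v : ℝ} (hpq : p < q) (hqu : q < u) (huv : u < v) :
    (v - p) / (v - q) < (u - p) / (u - q) := by
  rw [div_lt_div_iff₀ (by linarith) (by linarith)]
  nlinarith

lemma GammaSeq_add_mul_GammaSeq_sub {n : ℕ} (hn : n ≠ 0) (c t : ℝ) :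
    GammaSeq (c + t) n * GammaSeq (c - t) n =
      (n : ℝ) ^ (2 * c) * (n ! : ℝ) ^ 2 / ∏ j ∈ range (n + 1), ((c + j) ^ 2 - t ^ 2) := by
  have hn₀ : (0 : ℝ) < n := by positivity
  have hpow : (n : ℝ) ^ (c + t) * (n : ℝ) ^ (c - t) = (n : ℝ) ^ (2 * c) := by
    rw [← rpow_add hn₀]; ring_nf
  have hprod : ∏ j ∈ range (n + 1), ((c + j) ^ 2 - t ^ 2) =
      (∏ j ∈ range (n + 1), (c + t + j)) * ∏ j ∈ range (n + 1), (c - t + j) := by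
    rw [← prod_mul_distrib]; exact prod_congr rfl fun j _ ↦ by ring
  rw [GammaSeq, GammaSeq, hprod, ← hpow]
  ring

lemma Gamma_add_mul_Gamma_sub_pos {c t : ℝ} (ht : |t| < c) :
    0 < Gamma (c + t) * Gamma (c - t) := by
  rw [abs_lt] at ht
  exact mul_pos (Gamma_pos_of_pos (by linarith)) (Gamma_pos_of_pos (by linarith))

lemma tendsto_prod_sq_sub_div_sq_sub {c x y : ℝ} (hx : |x| < c) (hy : |y| < c) :
    Tendsto (fun n ↦ ∏ j ∈ range n, ((c + j) ^ 2 - x ^ 2) / ((c + j) ^ 2 - y ^ 2)) atTop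
      (𝓝 (Gamma (c + y) * Gamma (c - y) / (Gamma (c + x) * Gamma (c - x)))) := by
  have hlim := ((GammaSeq_tendsto_Gamma (c + y)).mul (GammaSeq_tendsto_Gamma (c - y))).div
    ((GammaSeq_tendsto_Gamma (c + x)).mul (GammaSeq_tendsto_Gamma (c - x)))
    (Gamma_add_mul_Gamma_sub_pos hx).ne'
  rw [abs_lt] at hx hy
  rw [← tendsto_add_atTop_iff_nat 1]
  refine hlim.congr' (eventually_ne_atTop 0 |>.mono fun n hn ↦ ?_)
  have hfac : ∀ t, -c < t → t < c → ∀ j : ℕ, (c + j) ^ 2 - t ^ 2 ≠ 0 := by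
    intro t ht ht' j
    have : (0 : ℝ) ≤ j := j.cast_nonneg
    nlinarith
  have hn₀ : (n : ℝ) ^ (2 * c) * (n ! : ℝ) ^ 2 ≠ 0 := by positivity
  simp only [Pi.div_apply, GammaSeq_add_mul_GammaSeq_sub hn, prod_div_distrib]
  field_simp [prod_ne_zero_iff.2 fun j _ ↦ hfac x hx.1 hx.2 j,
    prod_ne_zero_iff.2 fun j _ ↦ hfac y hy.1 hy.2 j]

lemma Gamma_add_mul_Gamma_sub_div_lt_of_lt {a b x y : ℝ} (hx : 0 ≤ x) (hxy : x < y)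
    (hyb : y < b) (hba : b < a) :
    Gamma (a + y) * Gamma (a - y) / (Gamma (a + x) * Gamma (a - x)) <
      Gamma (b + y) * Gamma (b - y) / (Gamma (b + x) * Gamma (b - x)) := by
  have hy : 0 < y := hx.trans_lt hxy
  have hsq : ∀ c : ℝ, y < c → ∀ j : ℕ, y ^ 2 < (c + j) ^ 2 := fun c hc j ↦
    pow_lt_pow_left₀ (by linarith [j.cast_nonneg (α := ℝ)]) hy.le two_ne_zero
  have hxy₂ : x ^ 2 < y ^ 2 := pow_lt_pow_left₀ hxy hx two_ne_zero
  have hfactor : ∀ j : ℕ, ((a + j) ^ 2 - x ^ 2) / ((a + j) ^ 2 - y ^ 2) <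
      ((b + j) ^ 2 - x ^ 2) / ((b + j) ^ 2 - y ^ 2) := fun j ↦
    sub_div_sub_lt_sub_div_sub hxy₂ (hsq b hyb j)
      (pow_lt_pow_left₀ (by linarith) (by linarith [j.cast_nonneg (α := ℝ)]) two_ne_zero)
  have habs : ∀ c, b ≤ c → |x| < c ∧ |y| < c := fun c hc ↦ by
    rw [abs_of_nonneg hx, abs_of_pos hy]; constructor <;> linarith
  refine lt_of_tendsto_prod_range_of_le (fun j ↦ ?_) (fun j ↦ (hfactor j).le) (hfactor 0)
    (tendsto_prod_sq_sub_div_sq_sub (habs a hba.le).1 (habs a hba.le).2)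
    (tendsto_prod_sq_sub_div_sq_sub (habs b le_rfl).1 (habs b le_rfl).2) ?_
  · have := hsq a (hyb.trans hba) j
    exact div_pos (by linarith) (by linarith)
  · exact div_pos (Gamma_add_mul_Gamma_sub_pos (habs a hba.le).2)
      (Gamma_add_mul_Gamma_sub_pos (habs a hba.le).1)

lemma strictAntiOn_Gamma_add_mul_Gamma_sub_div {a b : ℝ} (hba : b < a) :
    StrictAntiOn (fun t ↦ Gamma (a + t) * Gamma (a - t) / (Gamma (b + t) * Gamma (b - t)))
      (Ico 0 b) := by
  intro x hx y hy hxy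
  have hxb : |x| < b := by rw [abs_of_nonneg hx.1]; exact hx.2
  have hyb : |y| < b := by rw [abs_of_nonneg hy.1]; exact hy.2
  have key := Gamma_add_mul_Gamma_sub_div_lt_of_lt hx.1 hxy hy.2 hba
  rw [div_lt_div_iff₀ (Gamma_add_mul_Gamma_sub_pos (hxb.trans hba))
    (Gamma_add_mul_Gamma_sub_pos hxb)] at key
  rw [div_lt_div_iff₀ (Gamma_add_mul_Gamma_sub_pos hyb) (Gamma_add_mul_Gamma_sub_pos hxb)]
  linarith

lemma lamCoupling_eq (N : ℕ) (s α : ℝ) :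
    lamCoupling N s α = 2 ^ (2 * s) *
      (Gamma ((N + 2 * s) / 4 + α / 2) * Gamma ((N + 2 * s) / 4 - α / 2) /
        (Gamma ((N - 2 * s) / 4 + α / 2) * Gamma ((N - 2 * s) / 4 - α / 2))) := by
  rw [lamCoupling, mul_comm (Gamma ((N - 2 * s - 2 * α) / 4)), mul_div_assoc]
  ring_nf

theorem lamCoupling_strictAntiOn_general (N : ℕ) (s : ℝ) (hs : s ∈ Ioo (0:ℝ) 1) :
    StrictAntiOn (lamCoupling N s) (Ioo 0 ((N - 2 * s) / 2)) := by
  intro x hx y hy hxy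
  have hba : ((N : ℝ) - 2 * s) / 4 < (N + 2 * s) / 4 := by linarith [hs.1]
  have hmem : ∀ α ∈ Ioo 0 ((N - 2 * s) / 2), α / 2 ∈ Ico 0 (((N : ℝ) - 2 * s) / 4) :=
    fun α hα ↦ ⟨by linarith [hα.1], by linarith [hα.2]⟩
  rw [lamCoupling_eq, lamCoupling_eq]
  refine mul_lt_mul_of_pos_left ?_ (by positivity)
  exact strictAntiOn_Gamma_add_mul_Gamma_sub_div hba (hmem x hx) (hmem y hy) (by linarith)

/-- For `s ∈ (0,1)` and `N > 2s`, the map `α ↦ λ(α)` is strictly decreasing on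
`(0, (N-2s)/2)`. -/
theorem lamCoupling_strictAntiOn (N : ℕ) (s : ℝ) (hs : s ∈ Ioo (0:ℝ) 1)
    (hN : 2 * s < N) :
    StrictAntiOn (lamCoupling N s) (Ioo 0 ((N - 2 * s) / 2)) :=
  lamCoupling_strictAntiOn_general N s hs
end
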